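/- arXiv:2008.11499 — 2 statements merged into one kernel-verified Lean document; each statement's English description precedes it below -/
import Mathlib

section
/- The relational composition R;S of two strong reactive bisimulations R and S, defined by (P,X,T) ∈ R;S iff there exists Q with (P,X,Q)∈R and (Q,X,T)∈S, and (P,T) ∈ R;S iff there exists Q with (P,Q)∈R and (Q,T)∈S, is again a strong reactive bisimulation (after symmetric closure). -/
/-- Actions of an LTS with time-outs: visible actions from `A`,
the hidden action `τ`, and the time-out action `t`. -/
inductive Act (A : Type*) where
  | vis (a : A)
  | tau
  | to

variable {A : Type*} {Proc : Type*}

/-- `Idle Tr P X` expresses `I(P) ∩ (X ∪ {τ}) = ∅`: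
`P` has no outgoing `τ`-transition and no `a`-transition for `a ∈ X`. -/
def Idle (Tr : Proc → Act A → Proc → Prop) (P : Proc) (X : Set A) : Prop :=
  (∀ a ∈ X, ∀ P', ¬ Tr P (Act.vis a) P') ∧ (∀ P', ¬ Tr P Act.tau P')

/-- A strong reactive bisimulation: a symmetric relation on
`(P × Pow(A) × P) ∪ (P × P)`, given by its two components `R2` and `R3`,
satisfying the six clauses of Definition "reactive bisimilarity". -/
structure IsSRB (Tr : Proc → Act A → Proc → Prop)
    (R2 : Proc → Proc → Prop) (R3 : Proc → Set A → Proc → Prop) : Prop where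
  symm2 : ∀ P Q, R2 P Q → R2 Q P
  symm3 : ∀ P (X : Set A) Q, R3 P X Q → R3 Q X P
  tau2 : ∀ P Q P', R2 P Q → Tr P Act.tau P' → ∃ Q', Tr Q Act.tau Q' ∧ R2 P' Q'
  env2 : ∀ P Q, R2 P Q → ∀ X : Set A, R3 P X Q
  vis3 : ∀ P (X : Set A) Q a P', R3 P X Q → a ∈ X → Tr P (Act.vis a) P' →
      ∃ Q', Tr Q (Act.vis a) Q' ∧ R2 P' Q'
  tau3 : ∀ P (X : Set A) Q P', R3 P X Q → Tr P Act.tau P' →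
      ∃ Q', Tr Q Act.tau Q' ∧ R3 P' X Q'
  idle3 : ∀ P (X : Set A) Q, R3 P X Q → Idle Tr P X → R2 P Q
  timeout3 : ∀ P (X : Set A) Q P', R3 P X Q → Idle Tr P X → Tr P Act.to P' →
      ∃ Q', Tr Q Act.to Q' ∧ R3 P' X Q'

/-- Strong reactive bisimilarity `P ↔ᵣ Q`. -/
def RBisim (Tr : Proc → Act A → Proc → Prop) (P Q : Proc) : Prop :=
  ∃ R2 R3, IsSRB Tr R2 R3 ∧ R2 P Q

/-- Strong `X`-bisimilarity `P ↔ₓ Q`. -/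
def XBisim (Tr : Proc → Act A → Proc → Prop) (X : Set A) (P Q : Proc) : Prop :=
  ∃ R2 R3, IsSRB Tr R2 R3 ∧ R3 P X Q

/-- If `R3 P X Q` and `P` is idle on `X`, then so is `Q`. -/
lemma idle_transfer {Tr : Proc → Act A → Proc → Prop} {R2 : Proc → Proc → Prop}
    {R3 : Proc → Set A → Proc → Prop} (hR : IsSRB Tr R2 R3)
    {P : Proc} {X : Set A} {Q : Proc} (h : R3 P X Q) (hI : Idle Tr P X) :
    Idle Tr Q X := by
  have h' := hR.symm3 _ _ _ h
  constructor
  · intro a ha Q' hTr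
    obtain ⟨P', hP', _⟩ := hR.vis3 _ _ _ _ _ h' ha hTr
    exact hI.1 a ha P' hP'
  · intro Q' hTr
    obtain ⟨P', hP', _⟩ := hR.tau3 _ _ _ _ h' hTr
    exact hI.2 P' hP'

/-- The symmetric closure of the relational composition `R;S` of two strong
reactive bisimulations is again a strong reactive bisimulation. -/
theorem srb_composition (Tr : Proc → Act A → Proc → Prop)
    (R2 S2 : Proc → Proc → Prop) (R3 S3 : Proc → Set A → Proc → Prop)
    (hR : IsSRB Tr R2 R3) (hS : IsSRB Tr S2 S3) :
    IsSRB Tr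
      (fun P T => (∃ Q, R2 P Q ∧ S2 Q T) ∨ (∃ Q, R2 T Q ∧ S2 Q P))
      (fun P X T => (∃ Q, R3 P X Q ∧ S3 Q X T) ∨ (∃ Q, R3 T X Q ∧ S3 Q X P)) := by
  constructor
  · rintro P T (h | h); exacts [Or.inr h, Or.inl h]
  · rintro P X T (h | h); exacts [Or.inr h, Or.inl h]
  · rintro P T P' (⟨Q, hPQ, hQT⟩ | ⟨Q, hTQ, hQP⟩) hTr
    · obtain ⟨Q', hQ', h1⟩ := hR.tau2 _ _ _ hPQ hTr
      obtain ⟨T', hT', h2⟩ := hS.tau2 _ _ _ hQT hQ'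
      exact ⟨T', hT', Or.inl ⟨Q', h1, h2⟩⟩
    · obtain ⟨Q', hQ', h1⟩ := hS.tau2 _ _ _ (hS.symm2 _ _ hQP) hTr
      obtain ⟨T', hT', h2⟩ := hR.tau2 _ _ _ (hR.symm2 _ _ hTQ) hQ'
      exact ⟨T', hT', Or.inr ⟨Q', hR.symm2 _ _ h2, hS.symm2 _ _ h1⟩⟩
  · rintro P T (⟨Q, hPQ, hQT⟩ | ⟨Q, hTQ, hQP⟩) X
    · exact Or.inl ⟨Q, hR.env2 _ _ hPQ X, hS.env2 _ _ hQT X⟩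
    · exact Or.inr ⟨Q, hR.env2 _ _ hTQ X, hS.env2 _ _ hQP X⟩
  · rintro P X T a P' (⟨Q, hPQ, hQT⟩ | ⟨Q, hTQ, hQP⟩) ha hTr
    · obtain ⟨Q', hQ', h1⟩ := hR.vis3 _ _ _ _ _ hPQ ha hTr
      obtain ⟨T', hT', h2⟩ := hS.vis3 _ _ _ _ _ hQT ha hQ'
      exact ⟨T', hT', Or.inl ⟨Q', h1, h2⟩⟩
    · obtain ⟨Q', hQ', h1⟩ := hS.vis3 _ _ _ _ _ (hS.symm3 _ _ _ hQP) ha hTr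
      obtain ⟨T', hT', h2⟩ := hR.vis3 _ _ _ _ _ (hR.symm3 _ _ _ hTQ) ha hQ'
      exact ⟨T', hT', Or.inr ⟨Q', hR.symm2 _ _ h2, hS.symm2 _ _ h1⟩⟩
  · rintro P X T P' (⟨Q, hPQ, hQT⟩ | ⟨Q, hTQ, hQP⟩) hTr
    · obtain ⟨Q', hQ', h1⟩ := hR.tau3 _ _ _ _ hPQ hTr
      obtain ⟨T', hT', h2⟩ := hS.tau3 _ _ _ _ hQT hQ'
      exact ⟨T', hT', Or.inl ⟨Q', h1, h2⟩⟩
    · obtain ⟨Q', hQ', h1⟩ := hS.tau3 _ _ _ _ (hS.symm3 _ _ _ hQP) hTr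
      obtain ⟨T', hT', h2⟩ := hR.tau3 _ _ _ _ (hR.symm3 _ _ _ hTQ) hQ'
      exact ⟨T', hT', Or.inr ⟨Q', hR.symm3 _ _ _ h2, hS.symm3 _ _ _ h1⟩⟩
  · rintro P X T (⟨Q, hPQ, hQT⟩ | ⟨Q, hTQ, hQP⟩) hI
    · have hIQ := idle_transfer hR hPQ hI
      exact Or.inl ⟨Q, hR.idle3 _ _ _ hPQ hI, hS.idle3 _ _ _ hQT hIQ⟩
    · have hQP' := hS.symm3 _ _ _ hQP
      have hIQ := idle_transfer hS hQP' hI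
      exact Or.inr ⟨Q, hR.symm2 _ _ (hR.idle3 _ _ _ (hR.symm3 _ _ _ hTQ) hIQ),
        hS.symm2 _ _ (hS.idle3 _ _ _ hQP' hI)⟩
  · rintro P X T P' (⟨Q, hPQ, hQT⟩ | ⟨Q, hTQ, hQP⟩) hI hTr
    · have hIQ := idle_transfer hR hPQ hI
      obtain ⟨Q', hQ', h1⟩ := hR.timeout3 _ _ _ _ hPQ hI hTr
      obtain ⟨T', hT', h2⟩ := hS.timeout3 _ _ _ _ hQT hIQ hQ'
      exact ⟨T', hT', Or.inl ⟨Q', h1, h2⟩⟩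
    · have hQP' := hS.symm3 _ _ _ hQP
      have hIQ := idle_transfer hS hQP' hI
      obtain ⟨Q', hQ', h1⟩ := hS.timeout3 _ _ _ _ hQP' hI hTr
      obtain ⟨T', hT', h2⟩ := hR.timeout3 _ _ _ _ (hR.symm3 _ _ _ hTQ) hIQ hQ'
      exact ⟨T', hT', Or.inr ⟨Q', hR.symm3 _ _ _ h2, hS.symm3 _ _ _ h1⟩⟩
end

section
/- P ↔ᵣ Q if and only if there exists a strong time-out bisimulation B with P B Q, where the state space is closed under the environment operators θ_X. -/
variable {A : Type*} {Proc : Type*}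

/-- The state space is closed under environment operators `θ_X`, whose
transitions are exactly those generated by the three operational rules. -/
def ThetaSpec (Tr : Proc → Act A → Proc → Prop) (theta : Set A → Proc → Proc) : Prop :=
  ∀ (X : Set A) (P : Proc) (α : Act A) (Q : Proc),
    Tr (theta X P) α Q ↔
      ((α = Act.tau ∧ ∃ P', Tr P Act.tau P' ∧ Q = theta X P') ∨
       (∃ a, α = Act.vis a ∧ a ∈ X ∧ Tr P α Q) ∨
       (α ≠ Act.tau ∧ Idle Tr P X ∧ Tr P α Q))

/-- A strong time-out bisimulation. -/
def IsSTB (Tr : Proc → Act A → Proc → Prop) (theta : Set A → Proc → Proc)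
    (B : Proc → Proc → Prop) : Prop :=
  (∀ P Q, B P Q → B Q P) ∧
  (∀ P Q (α : Act A) P', B P Q → α ≠ Act.to → Tr P α P' →
      ∃ Q', Tr Q α Q' ∧ B P' Q') ∧
  (∀ P Q (X : Set A) P', B P Q → Idle Tr P X → Tr P Act.to P' →
      ∃ Q', Tr Q Act.to Q' ∧ B (theta X P') (theta X Q'))

/-- Strong reactive bisimilarity, characterised as the largest strong
time-out bisimulation. -/
def RBisimT (Tr : Proc → Act A → Proc → Prop) (theta : Set A → Proc → Proc)
    (P Q : Proc) : Prop :=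
  ∃ B, IsSTB Tr theta B ∧ B P Q

section Aux

variable (Tr : Proc → Act A → Proc → Prop) (theta : Set A → Proc → Proc)

/-- Idleness transfers along `R3` of an SRB. -/
lemma srb_idle {R2 : Proc → Proc → Prop} {R3 : Proc → Set A → Proc → Prop}
    (h : IsSRB Tr R2 R3) {P Q : Proc} {X : Set A}
    (h3 : R3 P X Q) (hI : Idle Tr P X) : Idle Tr Q X := by
  constructor
  · intro a ha Q' hTr
    obtain ⟨P', hP, -⟩ := h.vis3 Q X P a Q' (h.symm3 _ _ _ h3) ha hTr
    exact hI.1 a ha P' hP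
  · intro Q' hTr
    obtain ⟨P', hP, -⟩ := h.tau3 Q X P Q' (h.symm3 _ _ _ h3) hTr
    exact hI.2 P' hP

/-- Under `Idle P X`, `theta X P` is idle for `X` too. -/
lemma idle_theta (hθ : ThetaSpec Tr theta) {P : Proc} {X : Set A}
    (hI : Idle Tr P X) : Idle Tr (theta X P) X := by
  constructor
  · intro a ha P' hTr
    rcases (hθ X P (Act.vis a) P').mp hTr with ⟨h1, -⟩ | ⟨b, hb, hbX, hTr'⟩ | ⟨-, -, hTr'⟩
    · exact absurd h1 (by simp)
    · cases hb; exact hI.1 a ha P' hTr'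
    · exact hI.1 a ha P' hTr'
  · intro P' hTr
    rcases (hθ X P Act.tau P').mp hTr with ⟨-, P'', hTr', -⟩ | ⟨b, hb, -, -⟩ | ⟨hne, -, -⟩
    · exact hI.2 P'' hTr'
    · exact absurd hb (by simp)
    · exact absurd rfl hne

/-- If `Idle P X` and `theta X P` is idle for `Y`, then `P` is idle for `Y`. -/
lemma idle_of_theta_idle (hθ : ThetaSpec Tr theta) {P : Proc} {X Y : Set A}
    (hIX : Idle Tr P X) (hIY : Idle Tr (theta X P) Y) : Idle Tr P Y := by
  refine ⟨fun a ha P' hTr => ?_, hIX.2⟩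
  exact hIY.1 a ha P' ((hθ X P (Act.vis a) P').mpr
    (Or.inr (Or.inr ⟨by simp, hIX, hTr⟩)))

/-- Forward direction: an SRB yields a strong time-out bisimulation. -/
lemma srb_to_stb (hθ : ThetaSpec Tr theta) {R2 : Proc → Proc → Prop}
    {R3 : Proc → Set A → Proc → Prop} (h : IsSRB Tr R2 R3) :
    IsSTB Tr theta (fun P Q => R2 P Q ∨
      ∃ X P₀ Q₀, R3 P₀ X Q₀ ∧ P = theta X P₀ ∧ Q = theta X Q₀) := by
  refine ⟨?_, ?_, ?_⟩
  · rintro P Q (h2 | ⟨X, P₀, Q₀, h3, rfl, rfl⟩)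
    · exact Or.inl (h.symm2 _ _ h2)
    · exact Or.inr ⟨X, Q₀, P₀, h.symm3 _ _ _ h3, rfl, rfl⟩
  · rintro P Q α P' (h2 | ⟨X, P₀, Q₀, h3, rfl, rfl⟩) hα hTr
    · match α, hα with
      | Act.tau, _ =>
        obtain ⟨Q', hQ, h2'⟩ := h.tau2 P Q P' h2 hTr
        exact ⟨Q', hQ, Or.inl h2'⟩
      | Act.vis a, _ =>
        obtain ⟨Q', hQ, h2'⟩ := h.vis3 P {a} Q a P' (h.env2 P Q h2 {a}) rfl hTr
        exact ⟨Q', hQ, Or.inl h2'⟩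
    · rcases (hθ X P₀ α P').mp hTr with ⟨rfl, P₁, hP₁, rfl⟩ |
        ⟨a, rfl, haX, hTr'⟩ | ⟨hne, hIdle, hTr'⟩
      · obtain ⟨Q₁, hQ₁, h3'⟩ := h.tau3 P₀ X Q₀ P₁ h3 hP₁
        exact ⟨theta X Q₁,
          (hθ X Q₀ Act.tau (theta X Q₁)).mpr (Or.inl ⟨rfl, Q₁, hQ₁, rfl⟩),
          Or.inr ⟨X, P₁, Q₁, h3', rfl, rfl⟩⟩
      · obtain ⟨Q', hQ, h2'⟩ := h.vis3 P₀ X Q₀ a P' h3 haX hTr'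
        exact ⟨Q', (hθ X Q₀ (Act.vis a) Q').mpr
          (Or.inr (Or.inl ⟨a, rfl, haX, hQ⟩)), Or.inl h2'⟩
      · match α, hα, hne with
        | Act.vis a, _, _ =>
          have h2₀ := h.idle3 P₀ X Q₀ h3 hIdle
          obtain ⟨Q', hQ, h2'⟩ :=
            h.vis3 P₀ {a} Q₀ a P' (h.env2 P₀ Q₀ h2₀ {a}) rfl hTr'
          exact ⟨Q', (hθ X Q₀ (Act.vis a) Q').mpr
            (Or.inr (Or.inr ⟨by simp, srb_idle Tr h h3 hIdle, hQ⟩)), Or.inl h2'⟩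
  · rintro P Q X P' (h2 | ⟨Y, P₀, Q₀, h3, rfl, rfl⟩) hIdle hTr
    · obtain ⟨Q', hQ, h3'⟩ := h.timeout3 P X Q P' (h.env2 P Q h2 X) hIdle hTr
      exact ⟨Q', hQ, Or.inr ⟨X, P', Q', h3', rfl, rfl⟩⟩
    · rcases (hθ Y P₀ Act.to P').mp hTr with ⟨h1, -⟩ | ⟨b, hb, -, -⟩ | ⟨-, hIY, hTr'⟩
      · exact absurd h1 (by simp)
      · exact absurd hb (by simp)
      · have hPX : Idle Tr P₀ X := idle_of_theta_idle Tr theta hθ hIY hIdle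
        have h2₀ := h.idle3 P₀ Y Q₀ h3 hIY
        obtain ⟨Q', hQ, h3'⟩ :=
          h.timeout3 P₀ X Q₀ P' (h.env2 P₀ Q₀ h2₀ X) hPX hTr'
        refine ⟨Q', (hθ Y Q₀ Act.to Q').mpr
          (Or.inr (Or.inr ⟨by simp, srb_idle Tr h h3 hIY, hQ⟩)),
          Or.inr ⟨X, P', Q', h3', rfl, rfl⟩⟩

/-- Closure of a time-out bisimulation under environment operators and
"unwrapping" of idle environments. -/
inductive Bhat (B : Proc → Proc → Prop) : Proc → Proc → Prop
  | base {P Q} : B P Q → Bhat B P Q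
  | env {P Q} (X : Set A) : Bhat B P Q → Bhat B (theta X P) (theta X Q)
  | unidle {P Q} (X : Set A) : Idle Tr P X → Idle Tr Q X →
      Bhat B (theta X P) (theta X Q) → Bhat B P Q

lemma Bhat_symm {B : Proc → Proc → Prop} (hB : IsSTB Tr theta B) {P Q : Proc}
    (h : Bhat Tr theta B P Q) : Bhat Tr theta B Q P := by
  induction h with
  | base h => exact Bhat.base (hB.1 _ _ h)
  | env X _ ih => exact Bhat.env X ih
  | unidle X hP hQ _ ih => exact Bhat.unidle X hQ hP ih

lemma Bhat_step (hθ : ThetaSpec Tr theta) {B : Proc → Proc → Prop}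
    (hB : IsSTB Tr theta B) {P Q : Proc} (h : Bhat Tr theta B P Q) :
    ∀ (α : Act A) (P' : Proc), α ≠ Act.to → Tr P α P' →
      ∃ Q', Tr Q α Q' ∧ Bhat Tr theta B P' Q' := by
  have key : ∀ P Q, Bhat Tr theta B P Q →
      (∀ (α : Act A) (P' : Proc), α ≠ Act.to → Tr P α P' →
        ∃ Q', Tr Q α Q' ∧ Bhat Tr theta B P' Q') ∧
      (∀ (α : Act A) (Q' : Proc), α ≠ Act.to → Tr Q α Q' →
        ∃ P', Tr P α P' ∧ Bhat Tr theta B Q' P') := by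
    intro P Q h
    induction h with
    | @base P Q h =>
      constructor
      · intro α P' hα hTr
        obtain ⟨Q', hQ, h'⟩ := hB.2.1 P Q α P' h hα hTr
        exact ⟨Q', hQ, Bhat.base h'⟩
      · intro α Q' hα hTr
        obtain ⟨P', hP, h'⟩ := hB.2.1 Q P α Q' (hB.1 _ _ h) hα hTr
        exact ⟨P', hP, Bhat.base h'⟩
    | @env P₀ Q₀ X h ih =>
      have main : ∀ P₀ Q₀,
          (∀ (α : Act A) (P' : Proc), α ≠ Act.to → Tr P₀ α P' →
            ∃ Q', Tr Q₀ α Q' ∧ Bhat Tr theta B P' Q') →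
          (∀ (α : Act A) (Q' : Proc), α ≠ Act.to → Tr Q₀ α Q' →
            ∃ P', Tr P₀ α P' ∧ Bhat Tr theta B Q' P') →
          ∀ (α : Act A) (P' : Proc), α ≠ Act.to → Tr (theta X P₀) α P' →
            ∃ Q', Tr (theta X Q₀) α Q' ∧ Bhat Tr theta B P' Q' := by
        intro P₀ Q₀ fwd bwd α P' hα hTr
        have hIQ : Idle Tr P₀ X → Idle Tr Q₀ X := by
          intro hI
          constructor
          · intro a ha Q' hTr'
            obtain ⟨P'', hP'', -⟩ := bwd (Act.vis a) Q' (by simp) hTr'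
            exact hI.1 a ha P'' hP''
          · intro Q' hTr'
            obtain ⟨P'', hP'', -⟩ := bwd Act.tau Q' (by simp) hTr'
            exact hI.2 P'' hP''
        rcases (hθ X P₀ α P').mp hTr with ⟨rfl, P₁, hP₁, rfl⟩ |
          ⟨a, rfl, haX, hTr'⟩ | ⟨hne, hIdle, hTr'⟩
        · obtain ⟨Q₁, hQ₁, h'⟩ := fwd Act.tau P₁ (by simp) hP₁
          exact ⟨theta X Q₁,
            (hθ X Q₀ Act.tau (theta X Q₁)).mpr (Or.inl ⟨rfl, Q₁, hQ₁, rfl⟩),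
            Bhat.env X h'⟩
        · obtain ⟨Q', hQ, h'⟩ := fwd (Act.vis a) P' (by simp) hTr'
          exact ⟨Q', (hθ X Q₀ (Act.vis a) Q').mpr
            (Or.inr (Or.inl ⟨a, rfl, haX, hQ⟩)), h'⟩
        · obtain ⟨Q', hQ, h'⟩ := fwd α P' hα hTr'
          exact ⟨Q', (hθ X Q₀ α Q').mpr
            (Or.inr (Or.inr ⟨hne, hIQ hIdle, hQ⟩)), h'⟩
      exact ⟨main P₀ Q₀ ih.1 ih.2, main Q₀ P₀ ih.2 ih.1⟩
    | @unidle P₀ Q₀ X hIP hIQ h ih =>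
      have main : ∀ P₀ Q₀, Idle Tr P₀ X →
          (∀ (α : Act A) (P' : Proc), α ≠ Act.to → Tr (theta X P₀) α P' →
            ∃ Q', Tr (theta X Q₀) α Q' ∧ Bhat Tr theta B P' Q') →
          ∀ (α : Act A) (P' : Proc), α ≠ Act.to → Tr P₀ α P' →
            ∃ Q', Tr Q₀ α Q' ∧ Bhat Tr theta B P' Q' := by
        intro P₀ Q₀ hIP fwd α P' hα hTr
        have hne : α ≠ Act.tau := by
          rintro rfl; exact hIP.2 P' hTr
        obtain ⟨Q', hQ, h'⟩ := fwd α P'  hα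
          ((hθ X P₀ α P').mpr (Or.inr (Or.inr ⟨hne, hIP, hTr⟩)))
        refine ⟨Q', ?_, h'⟩
        rcases (hθ X Q₀ α Q').mp hQ with ⟨rfl, -⟩ | ⟨a, rfl, -, hTr'⟩ | ⟨-, -, hTr'⟩
        · exact absurd rfl hne
        · exact hTr'
        · exact hTr'
      exact ⟨main P₀ Q₀ hIP ih.1, main Q₀ P₀ hIQ ih.2⟩
  exact (key P Q h).1

lemma Bhat_idle (hθ : ThetaSpec Tr theta) {B : Proc → Proc → Prop}
    (hB : IsSTB Tr theta B) {P Q : Proc} {X : Set A}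
    (h : Bhat Tr theta B P Q) (hI : Idle Tr P X) : Idle Tr Q X := by
  have h' := Bhat_symm Tr theta hB h
  constructor
  · intro a ha Q' hTr
    obtain ⟨P', hP, -⟩ := Bhat_step Tr theta hθ hB h' (Act.vis a) Q' (by simp) hTr
    exact hI.1 a ha P' hP
  · intro Q' hTr
    obtain ⟨P', hP, -⟩ := Bhat_step Tr theta hθ hB h' Act.tau Q' (by simp) hTr
    exact hI.2 P' hP

lemma Bhat_to (hθ : ThetaSpec Tr theta) {B : Proc → Proc → Prop}
    (hB : IsSTB Tr theta B) {P Q : Proc} (h : Bhat Tr theta B P Q) :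
    ∀ (X : Set A) (P' : Proc), Idle Tr P X → Tr P Act.to P' →
      ∃ Q', Tr Q Act.to Q' ∧ Bhat Tr theta B (theta X P') (theta X Q') := by
  have key : ∀ P Q, Bhat Tr theta B P Q →
      (∀ (X : Set A) (P' : Proc), Idle Tr P X → Tr P Act.to P' →
        ∃ Q', Tr Q Act.to Q' ∧ Bhat Tr theta B (theta X P') (theta X Q')) ∧
      (∀ (X : Set A) (Q' : Proc), Idle Tr Q X → Tr Q Act.to Q' →
        ∃ P', Tr P Act.to P' ∧ Bhat Tr theta B (theta X Q') (theta X P')) := by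
    intro P Q h
    induction h with
    | @base P Q h =>
      constructor
      · intro X P' hI hTr
        obtain ⟨Q', hQ, h'⟩ := hB.2.2 P Q X P' h hI hTr
        exact ⟨Q', hQ, Bhat.base h'⟩
      · intro X Q' hI hTr
        obtain ⟨P', hP, h'⟩ := hB.2.2 Q P X Q' (hB.1 _ _ h) hI hTr
        exact ⟨P', hP, Bhat.base h'⟩
    | @env P₀ Q₀ X h ih =>
      have main : ∀ P₀ Q₀, Bhat Tr theta B P₀ Q₀ →
          (∀ (Y : Set A) (P' : Proc), Idle Tr P₀ Y → Tr P₀ Act.to P' →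
            ∃ Q', Tr Q₀ Act.to Q' ∧ Bhat Tr theta B (theta Y P') (theta Y Q')) →
          ∀ (Y : Set A) (P' : Proc), Idle Tr (theta X P₀) Y →
            Tr (theta X P₀) Act.to P' →
            ∃ Q', Tr (theta X Q₀) Act.to Q' ∧
              Bhat Tr theta B (theta Y P') (theta Y Q') := by
        intro P₀ Q₀ hsub fwd Y P' hIY hTr
        rcases (hθ X P₀ Act.to P').mp hTr with ⟨h1, -⟩ | ⟨b, hb, -, -⟩ |
          ⟨-, hIX, hTr'⟩
        · exact absurd h1 (by simp)
        · exact absurd hb (by simp)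
        · have hPY : Idle Tr P₀ Y := idle_of_theta_idle Tr theta hθ hIX hIY
          obtain ⟨Q', hQ, h'⟩ := fwd Y P' hPY hTr'
          exact ⟨Q', (hθ X Q₀ Act.to Q').mpr (Or.inr (Or.inr ⟨by simp,
            Bhat_idle Tr theta hθ hB hsub hIX, hQ⟩)), h'⟩
      exact ⟨main P₀ Q₀ h ih.1, main Q₀ P₀ (Bhat_symm Tr theta hB h) ih.2⟩
    | @unidle P₀ Q₀ X hIP hIQ h ih =>
      have main : ∀ P₀ Q₀, Idle Tr P₀ X →
          (∀ (Y : Set A) (P' : Proc), Idle Tr (theta X P₀) Y →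
            Tr (theta X P₀) Act.to P' →
            ∃ Q', Tr (theta X Q₀) Act.to Q' ∧
              Bhat Tr theta B (theta Y P') (theta Y Q')) →
          ∀ (Y : Set A) (P' : Proc), Idle Tr P₀ Y → Tr P₀ Act.to P' →
            ∃ Q', Tr Q₀ Act.to Q' ∧
              Bhat Tr theta B (theta Y P') (theta Y Q') := by
        intro P₀ Q₀ hIP fwd Y P' hPY hTr
        have hθIdle : Idle Tr (theta X P₀) Y := by
          constructor
          · intro a ha P'' hTr'
            rcases (hθ X P₀ (Act.vis a) P'').mp hTr' with ⟨h1, -⟩ |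
              ⟨b, hb, hbX, hTr''⟩ | ⟨-, -, hTr''⟩
            · exact absurd h1 (by simp)
            · cases hb; exact hPY.1 a ha P'' hTr''
            · exact hPY.1 a ha P'' hTr''
          · intro P'' hTr'
            rcases (hθ X P₀ Act.tau P'').mp hTr' with ⟨-, P₁, hP₁, -⟩ |
              ⟨b, hb, -, -⟩ | ⟨hne, -, -⟩
            · exact hIP.2 P₁ hP₁
            · exact absurd hb (by simp)
            · exact absurd rfl hne
        obtain ⟨Q', hQ, h'⟩ := fwd Y P' hθIdle
          ((hθ X P₀ Act.to P').mpr (Or.inr (Or.inr ⟨by simp, hIP, hTr⟩)))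
        refine ⟨Q', ?_, h'⟩
        rcases (hθ X Q₀ Act.to Q').mp hQ with ⟨h1, -⟩ | ⟨b, hb, -, -⟩ |
          ⟨-, -, hTr'⟩
        · exact absurd h1 (by simp)
        · exact absurd hb (by simp)
        · exact hTr'
      exact ⟨main P₀ Q₀ hIP ih.1, main Q₀ P₀ hIQ ih.2⟩
  exact (key P Q h).1

end Aux

section Aux2
variable (Tr : Proc → Act A → Proc → Prop) (theta : Set A → Proc → Proc)

lemma idle_untheta (hθ : ThetaSpec Tr theta) {Q : Proc} {X : Set A}
    (hI : Idle Tr (theta X Q) X) : Idle Tr Q X := by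
  constructor
  · intro a ha Q' hTr
    exact hI.1 a ha Q' ((hθ X Q (Act.vis a) Q').mpr
      (Or.inr (Or.inl ⟨a, rfl, ha, hTr⟩)))
  · intro Q' hTr
    exact hI.2 (theta X Q') ((hθ X Q Act.tau (theta X Q')).mpr
      (Or.inl ⟨rfl, Q', hTr, rfl⟩))

end Aux2

/-- `P ↔ᵣ Q` iff there exists a strong time-out bisimulation `B` with `P B Q`,
where the state space is closed under the environment operators `θ_X`. -/
theorem timeout_bisimulation_characterisation (Tr : Proc → Act A → Proc → Prop)
    (theta : Set A → Proc → Proc) (hθ : ThetaSpec Tr theta) (P Q : Proc) :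
    RBisim Tr P Q ↔ ∃ B, IsSTB Tr theta B ∧ B P Q := by
  constructor
  · rintro ⟨R2, R3, h, h2⟩
    exact ⟨_, srb_to_stb Tr theta hθ h, Or.inl h2⟩
  · rintro ⟨B, hB, hPQ⟩
    refine ⟨Bhat Tr theta B,
      fun P X Q => Bhat Tr theta B (theta X P) (theta X Q), ?_, Bhat.base hPQ⟩
    refine ⟨fun P Q h => Bhat_symm Tr theta hB h,
      fun P X Q h => Bhat_symm Tr theta hB h, ?_, fun P Q h X => Bhat.env X h,
      ?_, ?_, ?_, ?_⟩
    · intro P Q P' h hTr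
      exact Bhat_step Tr theta hθ hB h Act.tau P' (by simp) hTr
    · intro P X Q a P' h ha hTr
      obtain ⟨Q', hQ, h'⟩ := Bhat_step Tr theta hθ hB h (Act.vis a) P' (by simp)
        ((hθ X P (Act.vis a) P').mpr (Or.inr (Or.inl ⟨a, rfl, ha, hTr⟩)))
      refine ⟨Q', ?_, h'⟩
      rcases (hθ X Q (Act.vis a) Q').mp hQ with ⟨h1, -⟩ | ⟨b, hb, -, hTr'⟩ |
        ⟨-, -, hTr'⟩
      · exact absurd h1 (by simp)
      · exact hTr'
      · exact hTr'
    · intro P X Q P' h hTr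
      obtain ⟨Q', hQ, h'⟩ := Bhat_step Tr theta hθ hB h Act.tau (theta X P')
        (by simp) ((hθ X P Act.tau (theta X P')).mpr (Or.inl ⟨rfl, P', hTr, rfl⟩))
      rcases (hθ X Q Act.tau Q').mp hQ with ⟨-, Q₁, hQ₁, rfl⟩ | ⟨b, hb, -, -⟩ |
        ⟨hne, -, -⟩
      · exact ⟨Q₁, hQ₁, h'⟩
      · exact absurd hb (by simp)
      · exact absurd rfl hne
    · intro P X Q h hI
      have hIQ : Idle Tr Q X := idle_untheta Tr theta hθ
        (Bhat_idle Tr theta hθ hB h (idle_theta Tr theta hθ hI))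
      exact Bhat.unidle X hI hIQ h
    · intro P X Q P' h hI hTr
      obtain ⟨Q', hQ, h'⟩ := Bhat_to Tr theta hθ hB h X P'
        (idle_theta Tr theta hθ hI)
        ((hθ X P Act.to P').mpr (Or.inr (Or.inr ⟨by simp, hI, hTr⟩)))
      refine ⟨Q', ?_, h'⟩
      rcases (hθ X Q Act.to Q').mp hQ with ⟨h1, -⟩ | ⟨b, hb, -, -⟩ | ⟨-, -, hTr'⟩
      · exact absurd h1 (by simp)
      · exact absurd hb (by simp)
      · exact hTr'
end
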